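/- Assume (r1,r2,r3,r4,i,j,N) is admissible and r1 + r2 = r3 + r4. Then the shifted tuple (r1+N−2, r2+N−2, r3, r4, i, j+N−2, 2) is admissible, and F_2^N(r1, r2, i; r3, r4, j) = (−1)^N · [N−1]! · [N−2]! · Θ_2(N) · F_2^2(r1+N−2, r2+N−2, i; r3, r4, j+N−2), where Θ_2(N) = ∏_{m=1}^{N−2} ( [(r1+r2−i)/2 + m] · [(j+r2−r3)/2 + m] · [(j+r1−r4)/2 + m] · [(i+r3+r4)/2 + 1 + m] )^{−1/2}. (For N = 2 the empty product is 1 and the identity is trivial.) This expresses any type II multiplicity-free U_q(sl_N) 6-j symbol through a U_q(sl_2) 6-j symbol. -/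

import Mathlib

open Finset

/-- The quantum integer `[n] = (tⁿ − t⁻ⁿ)/(t − t⁻¹)`. -/
noncomputable def qint (t : ℝ) (n : ℤ) : ℝ := (t ^ n - t ^ (-n)) / (t - t⁻¹)

/-- The quantum factorial `[n]! = [1][2]⋯[n]`, with `[0]! = 1`
(and value `1` for negative arguments, which never occur below). -/
noncomputable def qfact (t : ℝ) (n : ℤ) : ℝ :=
  ∏ k ∈ Finset.range n.toNat, qint t ((k : ℤ) + 1)

/-- The q-Pochhammer symbol `(x; q)_n = ∏_{s=0}^{n−1} (1 − x qˢ)`. -/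
noncomputable def qpoch (x q : ℝ) (n : ℕ) : ℝ :=
  ∏ s ∈ Finset.range n, (1 - x * q ^ s)

/-- Admissibility of the tuple `(r₁,r₂,r₃,r₄,i,j,N)`. -/
def Admissible (r₁ r₂ r₃ r₄ i j N : ℤ) : Prop :=
  0 ≤ r₁ ∧ 0 ≤ r₂ ∧ 0 ≤ r₃ ∧ 0 ≤ r₄ ∧ 0 ≤ i ∧ 0 ≤ j ∧ 2 ≤ N ∧
  2 ∣ (r₁ + r₂ + i) ∧ 2 ∣ (r₃ + r₄ + i) ∧ 2 ∣ (r₁ + r₄ + j) ∧ 2 ∣ (r₂ + r₃ + j) ∧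
  max |r₁ - r₂| |r₃ - r₄| ≤ i ∧ i ≤ min (r₁ + r₂) (r₃ + r₄) ∧
  max |r₂ - r₃| |r₁ - r₄| ≤ j ∧ j ≤ min (r₂ + r₃) (r₁ + r₄)

/-- `ρ = (r₁+r₂+r₃+r₄)/2`. -/
def rho (r₁ r₂ r₃ r₄ : ℤ) : ℤ := (r₁ + r₂ + r₃ + r₄) / 2

/-- `m_max = (1/2)·min(r₁+r₂−i, r₃+r₄−i, r₁+r₄−j, r₂+r₃−j)`. -/
def mMax (r₁ r₂ r₃ r₄ i j : ℤ) : ℤ :=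
  (min (min (r₁ + r₂ - i) (r₃ + r₄ - i)) (min (r₁ + r₄ - j) (r₂ + r₃ - j))) / 2

/-- `m_min = (1/2)·max(0, r₁+r₃−i−j, r₂+r₄−i−j)`. -/
def mMin (r₁ r₂ r₃ r₄ i j : ℤ) : ℤ :=
  (max 0 (max (r₁ + r₃ - i - j) (r₂ + r₄ - i - j))) / 2

/-- `θ_N(a,b,c)`. -/
noncomputable def theta (t : ℝ) (N a b c : ℤ) : ℝ :=
  Real.sqrt (qfact t ((a + b - c) / 2) * qfact t ((a - b + c) / 2) *
    qfact t ((-a + b + c) / 2) / qfact t ((a + b + c) / 2 + N - 1))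

/-- `K′ = θ_N(r₁,r₂,i)·θ_N(r₃,r₄,i)·θ_N(r₁,r₄,j)·θ_N(r₂,r₃,j)·[N−1]!·[N−2]!`. -/
noncomputable def Kprime (t : ℝ) (N r₁ r₂ r₃ r₄ i j : ℤ) : ℝ :=
  theta t N r₁ r₂ i * theta t N r₃ r₄ i * theta t N r₁ r₄ j * theta t N r₂ r₃ j *
    qfact t (N - 1) * qfact t (N - 2)

/-- The multiplicity-free 6-j expression `F_T^N(r₁,r₂,i; r₃,r₄,j)` of type `T ∈ {1,2}`. -/
noncomputable def F (t : ℝ) (T : ℕ) (N r₁ r₂ i r₃ r₄ j : ℤ) : ℝ :=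
  Kprime t N r₁ r₂ r₃ r₄ i j *
    ∑ m ∈ Finset.Icc (mMin r₁ r₂ r₃ r₄ i j) (mMax r₁ r₂ r₃ r₄ i j),
      (-1 : ℝ) ^ (rho r₁ r₂ r₃ r₄ - m) * qfact t (rho r₁ r₂ r₃ r₄ + N - 1 - m) /
        (qfact t m * qfact t ((r₃ + r₄ - i) / 2 - m) * qfact t ((r₂ + r₃ - j) / 2 - m) *
          qfact t ((r₁ + r₄ - j) / 2 - m) * qfact t ((i + j - r₂ - r₄) / 2 + m) *
          qfact t ((r₁ + r₂ - i) / 2 + (N - 2) * (if T = 2 then 1 else 0) - m) *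
          qfact t ((i + j - r₁ - r₃) / 2 + (N - 2) * (if T = 1 then 1 else 0) + m))

/-- The prefactor `K_T` (for the case `m_min = 0`). -/
noncomputable def Kfac (t : ℝ) (T : ℕ) (N r₁ r₂ i r₃ r₄ j : ℤ) : ℝ :=
  Kprime t N r₁ r₂ r₃ r₄ i j * qfact t (rho r₁ r₂ r₃ r₄ + N - 1) /
    (qfact t ((r₃ + r₄ - i) / 2) *
      qfact t ((r₁ + r₂ - i) / 2 + (N - 2) * (if T = 2 then 1 else 0)) *
      qfact t ((r₂ + r₃ - j) / 2) * qfact t ((r₁ + r₄ - j) / 2) *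
      qfact t ((i + j - r₂ - r₄) / 2) *
      qfact t ((i + j - r₁ - r₃) / 2 + (N - 2) * (if T = 1 then 1 else 0)))

/-! Shifting `r₁, r₂, j` by `N − 2` moves exactly one factorial of each of `θ_N(r₁,r₂,i)`,
`θ_N(r₁,r₄,j)`, `θ_N(r₂,r₃,j)` up by `N − 2`, while lowering `N` to `2` moves the denominator of
`θ_N(r₃,r₄,i)` down by `N − 2`. Since `[x + K]! = [x]! · [x+1] ⋯ [x+K]`, each `θ_N` is the
corresponding `θ_2` of the shifted tuple divided by the square root of such a product, and the four
products make up `Θ₂(N)`. In the type II sum the shift leaves the summation range (this is where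
`r₁ + r₂ = r₃ + r₄` enters) and every factorial unchanged, and only changes the sign by `(−1)^N`. -/

lemma prod_Icc_one_eq_prod_range {M : Type*} [CommMonoid M] (K : ℤ) (f : ℤ → M) :
    ∏ m ∈ Icc (1 : ℤ) K, f m = ∏ s ∈ range K.toNat, f (s + 1) := by
  refine prod_nbij' (fun m => (m - 1).toNat) (fun s => s + 1) ?_ ?_ ?_ ?_ ?_ <;>
    simp only [mem_Icc, mem_range] <;> intros <;> first | omega | congr 1; omega

lemma prod_inv_sqrt {ι : Type*} {s : Finset ι} {f : ι → ℝ} (hf : ∀ m ∈ s, 0 ≤ f m) :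
    ∏ m ∈ s, (√(f m))⁻¹ = (√(∏ m ∈ s, f m))⁻¹ := by
  rw [prod_inv_distrib, Real.sqrt_prod _ hf]

lemma prod_inv_sqrt_mul {ι : Type*} {s : Finset ι} {f g : ι → ℝ} (hf : ∀ m ∈ s, 0 ≤ f m) :
    ∏ m ∈ s, (√(f m * g m))⁻¹ = (∏ m ∈ s, (√(f m))⁻¹) * ∏ m ∈ s, (√(g m))⁻¹ := by
  rw [← prod_mul_distrib]
  exact prod_congr rfl fun m hm => by rw [Real.sqrt_mul (hf m hm), mul_inv]

section QuantumNumbers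

variable {t : ℝ}

lemma sub_inv_ne_zero_of_ne_one (ht : 0 < t) (ht1 : t ≠ 1) : t - t⁻¹ ≠ 0 := by
  rcases ht1.lt_or_gt with h | h
  · linarith [(one_lt_inv₀ ht).mpr h]
  · linarith [inv_lt_one_of_one_lt₀ h]

lemma qint_one (ht : 0 < t) (ht1 : t ≠ 1) : qint t 1 = 1 := by
  rw [qint, zpow_one, zpow_neg_one, div_self (sub_inv_ne_zero_of_ne_one ht ht1)]

lemma qint_pos (ht : 0 < t) (ht1 : t ≠ 1) {n : ℤ} (hn : 1 ≤ n) : 0 < qint t n := by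
  have hneg : -n < n := by omega
  rcases ht1.lt_or_gt with h | h
  · exact div_pos_of_neg_of_neg (by linarith [zpow_lt_zpow_right_of_lt_one₀ ht h hneg])
      (by linarith [(one_lt_inv₀ ht).mpr h])
  · exact div_pos (by linarith [zpow_lt_zpow_right₀ h hneg]) (by linarith [inv_lt_one_of_one_lt₀ h])

lemma qfact_zero : qfact t 0 = 1 := by simp [qfact]

lemma qfact_one (ht : 0 < t) (ht1 : t ≠ 1) : qfact t 1 = 1 := by simp [qfact, qint_one ht ht1]

lemma qfact_add {a K : ℤ} (ha : 0 ≤ a) (hK : 0 ≤ K) :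
    qfact t (a + K) = qfact t a * ∏ m ∈ Icc (1 : ℤ) K, qint t (a + m) := by
  rw [qfact, qfact, Int.toNat_add ha hK, prod_range_add, prod_Icc_one_eq_prod_range]
  refine congrArg _ (prod_congr rfl fun s _ => congrArg _ ?_)
  omega

lemma prod_qint_pos (ht : 0 < t) (ht1 : t ≠ 1) {a : ℤ} (ha : 0 ≤ a) (K : ℤ) :
    0 < ∏ m ∈ Icc (1 : ℤ) K, qint t (a + m) :=
  prod_pos fun _ hm => qint_pos ht ht1 (by rw [mem_Icc] at hm; omega)

end QuantumNumbers

section Theta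

variable {t : ℝ}

lemma theta_swap (N a b c : ℤ) : theta t N a b c = theta t N a c b := by
  rw [theta, theta]
  ring_nf

lemma theta_eq_theta_two_add_add (ht : 0 < t) (ht1 : t ≠ 1) {N a b c : ℤ} (hN : 2 ≤ N)
    (hc : c ≤ a + b) :
    theta t N a b c = theta t 2 (a + N - 2) (b + N - 2) c *
      (√(∏ m ∈ Icc (1 : ℤ) (N - 2), qint t ((a + b - c) / 2 + m)))⁻¹ := by
  have hS := prod_qint_pos ht ht1 (a := (a + b - c) / 2) (by omega) (N - 2)
  rw [eq_mul_inv_iff_mul_eq₀ (Real.sqrt_pos.2 hS).ne', theta, theta, ← Real.sqrt_mul' _ hS.le,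
    show (a + N - 2 + (b + N - 2) - c) / 2 = (a + b - c) / 2 + (N - 2) by omega,
    show (a + N - 2 - (b + N - 2) + c) / 2 = (a - b + c) / 2 by omega,
    show (-(a + N - 2) + (b + N - 2) + c) / 2 = (-a + b + c) / 2 by omega,
    show (a + N - 2 + (b + N - 2) + c) / 2 + 2 - 1 = (a + b + c) / 2 + N - 1 by omega,
    qfact_add (by omega) (by omega)]
  congr 1
  ring

lemma theta_eq_theta_two (ht : 0 < t) (ht1 : t ≠ 1) {N a b c : ℤ} (hN : 2 ≤ N)
    (habc : 0 ≤ a + b + c) :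
    theta t N a b c = theta t 2 a b c *
      (√(∏ m ∈ Icc (1 : ℤ) (N - 2), qint t ((a + b + c) / 2 + 1 + m)))⁻¹ := by
  have hS := prod_qint_pos ht ht1 (a := (a + b + c) / 2 + 1) (by omega) (N - 2)
  rw [eq_mul_inv_iff_mul_eq₀ (Real.sqrt_pos.2 hS).ne', theta, theta, ← Real.sqrt_mul' _ hS.le,
    show (a + b + c) / 2 + N - 1 = (a + b + c) / 2 + 1 + (N - 2) by omega,
    show (a + b + c) / 2 + 2 - 1 = (a + b + c) / 2 + 1 by omega,
    qfact_add (by omega) (by omega)]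
  field_simp

lemma Kprime_eq_Kprime_two (ht : 0 < t) (ht1 : t ≠ 1) {r₁ r₂ r₃ r₄ i j N : ℤ}
    (hadm : Admissible r₁ r₂ r₃ r₄ i j N) :
    Kprime t N r₁ r₂ r₃ r₄ i j =
      qfact t (N - 1) * qfact t (N - 2) *
        (∏ m ∈ Icc (1 : ℤ) (N - 2),
          (√(qint t ((r₁ + r₂ - i) / 2 + m) * qint t ((j + r₂ - r₃) / 2 + m) *
            qint t ((j + r₁ - r₄) / 2 + m) * qint t ((i + r₃ + r₄) / 2 + 1 + m)))⁻¹) *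
        Kprime t 2 (r₁ + N - 2) (r₂ + N - 2) r₃ r₄ i (j + N - 2) := by
  obtain ⟨h1, h2, h3, h4, hi, hj, hN, -, -, -, -, hi_lo, hi_hi, hj_lo, hj_hi⟩ := hadm
  simp only [max_le_iff, le_min_iff, abs_le] at hi_lo hi_hi hj_lo hj_hi
  have hq : ∀ {a : ℤ}, 0 ≤ a → ∀ m ∈ Icc (1 : ℤ) (N - 2), 0 ≤ qint t (a + m) :=
    fun ha m hm => (qint_pos ht ht1 (by rw [mem_Icc] at hm; omega)).le
  rw [prod_inv_sqrt_mul, prod_inv_sqrt_mul, prod_inv_sqrt_mul, prod_inv_sqrt (hq (by omega)),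
    prod_inv_sqrt (hq (by omega)), prod_inv_sqrt (hq (by omega)), prod_inv_sqrt (hq (by omega)),
    Kprime, Kprime, theta_swap N r₁ r₄ j, theta_swap N r₂ r₃ j,
    theta_eq_theta_two_add_add ht ht1 hN hi_hi.1, theta_eq_theta_two ht ht1 hN (by omega),
    theta_eq_theta_two_add_add ht ht1 hN (by omega), theta_eq_theta_two_add_add ht ht1 hN (by omega),
    theta_swap 2 (r₁ + N - 2) (j + N - 2) r₄, theta_swap 2 (r₂ + N - 2) (j + N - 2) r₃,
    add_comm r₁ j, add_comm r₂ j, show i + r₃ + r₄ = r₃ + r₄ + i by ring,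
    show (2 : ℤ) - 1 = 1 by norm_num, sub_self, qfact_one ht ht1, qfact_zero]
  · ring
  · exact hq (by omega)
  · exact fun m hm => mul_nonneg (hq (by omega) m hm) (hq (by omega) m hm)
  · exact fun m hm => mul_nonneg (mul_nonneg (hq (by omega) m hm) (hq (by omega) m hm))
      (hq (by omega) m hm)

end Theta

lemma Admissible.shift {r₁ r₂ r₃ r₄ i j N : ℤ} (hadm : Admissible r₁ r₂ r₃ r₄ i j N) :
    Admissible (r₁ + N - 2) (r₂ + N - 2) r₃ r₄ i (j + N - 2) 2 := by
  simp only [Admissible, max_le_iff, le_min_iff, abs_le] at hadm ⊢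
  omega

lemma Admissible.two_le {r₁ r₂ r₃ r₄ i j N : ℤ} (hadm : Admissible r₁ r₂ r₃ r₄ i j N) : 2 ≤ N :=
  hadm.2.2.2.2.2.2.1

noncomputable def racahTerm (t : ℝ) (T : ℕ) (N r₁ r₂ i r₃ r₄ j m : ℤ) : ℝ :=
  (-1 : ℝ) ^ (rho r₁ r₂ r₃ r₄ - m) * qfact t (rho r₁ r₂ r₃ r₄ + N - 1 - m) /
    (qfact t m * qfact t ((r₃ + r₄ - i) / 2 - m) * qfact t ((r₂ + r₃ - j) / 2 - m) *
      qfact t ((r₁ + r₄ - j) / 2 - m) * qfact t ((i + j - r₂ - r₄) / 2 + m) *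
      qfact t ((r₁ + r₂ - i) / 2 + (N - 2) * (if T = 2 then 1 else 0) - m) *
      qfact t ((i + j - r₁ - r₃) / 2 + (N - 2) * (if T = 1 then 1 else 0) + m))

lemma F_eq_Kprime_mul_sum (t : ℝ) (T : ℕ) (N r₁ r₂ i r₃ r₄ j : ℤ) :
    F t T N r₁ r₂ i r₃ r₄ j = Kprime t N r₁ r₂ r₃ r₄ i j *
      ∑ m ∈ Icc (mMin r₁ r₂ r₃ r₄ i j) (mMax r₁ r₂ r₃ r₄ i j), racahTerm t T N r₁ r₂ i r₃ r₄ j m :=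
  rfl

lemma mMin_shift (r₁ r₂ r₃ r₄ i j N : ℤ) :
    mMin (r₁ + N - 2) (r₂ + N - 2) r₃ r₄ i (j + N - 2) = mMin r₁ r₂ r₃ r₄ i j := by
  unfold mMin; omega

lemma mMax_shift {r₁ r₂ r₃ r₄ i j N : ℤ} (hN : 2 ≤ N) (hfus : r₁ + r₂ = r₃ + r₄) :
    mMax (r₁ + N - 2) (r₂ + N - 2) r₃ r₄ i (j + N - 2) = mMax r₁ r₂ r₃ r₄ i j := by
  unfold mMax; omega

lemma racahTerm_two_shift (t : ℝ) (N r₁ r₂ i r₃ r₄ j m : ℤ) :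
    racahTerm t 2 N r₁ r₂ i r₃ r₄ j m =
      (-1 : ℝ) ^ N * racahTerm t 2 2 (r₁ + N - 2) (r₂ + N - 2) i r₃ r₄ (j + N - 2) m := by
  have hρ : rho (r₁ + N - 2) (r₂ + N - 2) r₃ r₄ = rho r₁ r₂ r₃ r₄ + (N - 2) := by unfold rho; omega
  have hsign : (-1 : ℝ) ^ (rho r₁ r₂ r₃ r₄ - m) =
      (-1) ^ N * (-1) ^ (rho r₁ r₂ r₃ r₄ + (N - 2) - m) := by
    rw [show rho r₁ r₂ r₃ r₄ - m = N + (rho r₁ r₂ r₃ r₄ + (N - 2) - m) + 2 * (1 - N) by ring,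
      zpow_add₀ (by norm_num), zpow_add₀ (by norm_num), zpow_mul]
    norm_num
  simp only [racahTerm, hρ, hsign, if_pos, show (2 : ℕ) ≠ 1 by decide, if_false, mul_one,
    mul_zero, add_zero, sub_self, mul_div_assoc]
  rw [show rho r₁ r₂ r₃ r₄ + (N - 2) + 2 - 1 - m = rho r₁ r₂ r₃ r₄ + N - 1 - m by ring,
    show (r₂ + N - 2 + r₃ - (j + N - 2)) / 2 = (r₂ + r₃ - j) / 2 by ring_nf,
    show (r₁ + N - 2 + r₄ - (j + N - 2)) / 2 = (r₁ + r₄ - j) / 2 by ring_nf,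
    show (i + (j + N - 2) - (r₂ + N - 2) - r₄) / 2 = (i + j - r₂ - r₄) / 2 by ring_nf,
    show (i + (j + N - 2) - (r₁ + N - 2) - r₃) / 2 = (i + j - r₁ - r₃) / 2 by ring_nf,
    show (r₁ + N - 2 + (r₂ + N - 2) - i) / 2 = (r₁ + r₂ - i) / 2 + (N - 2) by omega]
  ring

lemma sum_racahTerm_two_shift (t : ℝ) {r₁ r₂ r₃ r₄ i j N : ℤ} (hN : 2 ≤ N)
    (hfus : r₁ + r₂ = r₃ + r₄) :
    ∑ m ∈ Icc (mMin r₁ r₂ r₃ r₄ i j) (mMax r₁ r₂ r₃ r₄ i j), racahTerm t 2 N r₁ r₂ i r₃ r₄ j m =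
      (-1 : ℝ) ^ N * ∑ m ∈ Icc (mMin (r₁ + N - 2) (r₂ + N - 2) r₃ r₄ i (j + N - 2))
        (mMax (r₁ + N - 2) (r₂ + N - 2) r₃ r₄ i (j + N - 2)),
        racahTerm t 2 2 (r₁ + N - 2) (r₂ + N - 2) i r₃ r₄ (j + N - 2) m := by
  rw [mMin_shift, mMax_shift hN hfus, mul_sum]
  exact sum_congr rfl fun m _ => racahTerm_two_shift t N r₁ r₂ i r₃ r₄ j m

/-- any type II multiplicity-free `U_q(sl_N)` 6-j symbol reduces to a
`U_q(sl_2)` one: the shifted tuple is admissible and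
`F_2^N(r₁,r₂,i;r₃,r₄,j) = (−1)^N [N−1]! [N−2]! Θ₂(N) F_2^2(r₁+N−2, r₂+N−2, i; r₃, r₄, j+N−2)`. -/
theorem stmt8 (t : ℝ) (ht : 0 < t) (ht1 : t ≠ 1) (r₁ r₂ r₃ r₄ i j N : ℤ)
    (hadm : Admissible r₁ r₂ r₃ r₄ i j N) (hfus : r₁ + r₂ = r₃ + r₄) :
    Admissible (r₁ + N - 2) (r₂ + N - 2) r₃ r₄ i (j + N - 2) 2 ∧
    F t 2 N r₁ r₂ i r₃ r₄ j =
      (-1 : ℝ) ^ N * qfact t (N - 1) * qfact t (N - 2) *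
        (∏ m ∈ Finset.Icc (1 : ℤ) (N - 2),
          (Real.sqrt (qint t ((r₁ + r₂ - i) / 2 + m) * qint t ((j + r₂ - r₃) / 2 + m) *
            qint t ((j + r₁ - r₄) / 2 + m) * qint t ((i + r₃ + r₄) / 2 + 1 + m)))⁻¹) *
        F t 2 2 (r₁ + N - 2) (r₂ + N - 2) i r₃ r₄ (j + N - 2) := by
  refine ⟨hadm.shift, ?_⟩
  rw [F_eq_Kprime_mul_sum, F_eq_Kprime_mul_sum, sum_racahTerm_two_shift t hadm.two_le hfus,
    Kprime_eq_Kprime_two ht ht1 hadm]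
  ring
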